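/- arXiv:2009.14437 — 3 statements merged into one kernel-verified Lean document; each statement's English description precedes it below -/
import Mathlib

section
/- There exists an alternating Streett automaton A with transition conditions in disjunctive normal form that is ∃-GFG, but for which Eve has no strategy resolving her nondeterminism that depends only on the word read so far (i.e., no function σ : Σ⁺ → Boxes_A whose induced box sequences are universally accepting on all words of L(A)). -/
namespace GFGPaper

/-- Positive Boolean formulas over `Q`. -/
inductive PosBool (Q : Type) : Type
  | atom : Q → PosBool Q
  | band : PosBool Q → PosBool Q → PosBool Q
  | bor  : PosBool Q → PosBool Q → PosBool Q

/-- A (positional) choice of Eve inside a positive Boolean formula: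
she resolves every disjunction (possibly differently in different conjuncts). -/
inductive EveChoice {Q : Type} : PosBool Q → Type
  | atom (q : Q) : EveChoice (PosBool.atom q)
  | band {φ ψ : PosBool Q} : EveChoice φ → EveChoice ψ → EveChoice (PosBool.band φ ψ)
  | borl {φ ψ : PosBool Q} : EveChoice φ → EveChoice (PosBool.bor φ ψ)
  | borr {φ ψ : PosBool Q} : EveChoice ψ → EveChoice (PosBool.bor φ ψ)

/-- The atoms that Adam (resolving conjunctions) can reach against Eve's choice. -/
def EveChoice.outcome {Q : Type} : {φ : PosBool Q} → EveChoice φ → Set Q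
  | _, .atom q => {q}
  | _, .band c d => c.outcome ∪ d.outcome
  | _, .borl c => c.outcome
  | _, .borr c => c.outcome

/-- A choice of Adam inside a positive Boolean formula: he resolves every conjunction. -/
inductive AdamChoice {Q : Type} : PosBool Q → Type
  | atom (q : Q) : AdamChoice (PosBool.atom q)
  | bandl {φ ψ : PosBool Q} : AdamChoice φ → AdamChoice (PosBool.band φ ψ)
  | bandr {φ ψ : PosBool Q} : AdamChoice ψ → AdamChoice (PosBool.band φ ψ)
  | bor {φ ψ : PosBool Q} : AdamChoice φ → AdamChoice ψ → AdamChoice (PosBool.bor φ ψ)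

/-- The atoms Eve (resolving disjunctions) can reach against Adam's choice. -/
def AdamChoice.outcome {Q : Type} : {φ : PosBool Q} → AdamChoice φ → Set Q
  | _, .atom q => {q}
  | _, .bandl c => c.outcome
  | _, .bandr c => c.outcome
  | _, .bor c d => c.outcome ∪ d.outcome

/-- The unique atom reached when Eve plays `e` and Adam plays `a` on the same formula. -/
def resolve {Q : Type} : {φ : PosBool Q} → EveChoice φ → AdamChoice φ → Q
  | _, .atom q, _ => q
  | _, .band c _, .bandl e => resolve c e
  | _, .band _ d, .bandr e => resolve d e
  | _, .borl c, .bor e _ => resolve c e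
  | _, .borr c, .bor _ f => resolve c f

def InfOften (p : ℕ → Prop) : Prop := ∀ N, ∃ n, N ≤ n ∧ p n

/-- The parity condition: the maximal priority occurring infinitely often is even. -/
def ParityAcc (c : ℕ → ℕ) : Prop :=
  ∃ p, Even p ∧ InfOften (fun n => c n = p) ∧ ∀ q, p < q → ¬ InfOften (fun n => c n = q)

/-- An alternating automaton with an abstract acceptance condition on
infinite sequences of transitions. -/
structure AltAut (A Q : Type) where
  init : Q
  δ : Q → A → PosBool Q
  acc : (ℕ → Q × A × Q) → Prop

def trace {A Q : Type} (w : ℕ → A) (ρ : ℕ → Q) : ℕ → Q × A × Q :=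
  fun n => (ρ n, w n, ρ (n + 1))

/-- Acceptance via the model-checking game: Eve has a (history-dependent)
strategy resolving the disjunctions such that every consistent path
(i.e. every way for Adam to resolve the conjunctions) is accepting. -/
def AltAut.Accepts {A Q : Type} (M : AltAut A Q) (w : ℕ → A) : Prop :=
  ∃ σ : List Q → (n : ℕ) → (q : Q) → EveChoice (M.δ q (w n)),
    ∀ ρ : ℕ → Q, ρ 0 = M.init →
      (∀ n, ρ (n + 1) ∈ (σ (List.ofFn fun i : Fin n => ρ i.val) n (ρ n)).outcome) →
      M.acc (trace w ρ)

/-- Eve wins her letter game: she resolves disjunctions online (knowing only the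
play so far) so that whenever the word Adam produces is in the language,
the constructed path is accepting. -/
def ExistsGFG {A Q : Type} (M : AltAut A Q) : Prop :=
  ∃ σ : List (A × Q) → (a : A) → (q : Q) → EveChoice (M.δ q a),
    ∀ (w : ℕ → A) (ρ : ℕ → Q), ρ 0 = M.init →
      (∀ n, ρ (n + 1) ∈
        (σ (List.ofFn fun i : Fin n => (w i.val, ρ (i.val + 1))) (w n) (ρ n)).outcome) →
      M.Accepts w → M.acc (trace w ρ)

/-- Adam wins his letter game: he resolves conjunctions online so that whenever the
word is not in the language, the constructed path is rejecting. -/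
def ForallGFG {A Q : Type} (M : AltAut A Q) : Prop :=
  ∃ τ : List (A × Q) → (a : A) → (q : Q) → AdamChoice (M.δ q a),
    ∀ (w : ℕ → A) (ρ : ℕ → Q), ρ 0 = M.init →
      (∀ n, ρ (n + 1) ∈
        (τ (List.ofFn fun i : Fin n => (w i.val, ρ (i.val + 1))) (w n) (ρ n)).outcome) →
      M.Accepts w ∨ ¬ M.acc (trace w ρ)

/-- Eve wins her letter game with a strategy that is positional in the expanded
letter game, i.e. depends only on the word read so far and the current state. -/
def EveWinsPositional {A Q : Type} (M : AltAut A Q) : Prop :=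
  ∃ σ : List A → (a : A) → (q : Q) → EveChoice (M.δ q a),
    ∀ (w : ℕ → A) (ρ : ℕ → Q), ρ 0 = M.init →
      (∀ n, ρ (n + 1) ∈ (σ (List.ofFn fun i : Fin n => w i.val) (w n) (ρ n)).outcome) →
      M.Accepts w → M.acc (trace w ρ)

/-- Alternating parity automaton (priorities on transitions). -/
structure APW (A Q : Type) where
  init : Q
  δ : Q → A → PosBool Q
  prio : Q → A → Q → ℕ

def APW.toAlt {A Q : Type} (M : APW A Q) : AltAut A Q :=
  { init := M.init, δ := M.δ,
    acc := fun t => ParityAcc fun n => M.prio (t n).1 (t n).2.1 (t n).2.2 }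

def APW.Accepts {A Q : Type} (M : APW A Q) (w : ℕ → A) : Prop := M.toAlt.Accepts w

def PosBool.dual {Q : Type} : PosBool Q → PosBool Q
  | .atom q => .atom q
  | .band φ ψ => .bor φ.dual ψ.dual
  | .bor φ ψ => .band φ.dual ψ.dual

/-- The dual automaton: swap ∧/∨ and increase all priorities by one. -/
def APW.dual {A Q : Type} (M : APW A Q) : APW A Q :=
  { init := M.init, δ := fun q a => (M.δ q a).dual,
    prio := fun q a q' => M.prio q a q' + 1 }

/-- The box of a positional Eve strategy on the one-step arena over `a`. -/
def stratBox {A Q : Type} (δ : Q → A → PosBool Q) (a : A)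
    (σ : (q : Q) → EveChoice (δ q a)) : Set (Q × A × Q) :=
  { t | t.2.1 = a ∧ t.2.2 ∈ (σ t.1).outcome }

def BoxesAt {A Q : Type} (δ : Q → A → PosBool Q) (a : A) : Set (Set (Q × A × Q)) :=
  Set.range (stratBox δ a)

def Boxes {A Q : Type} (δ : Q → A → PosBool Q) : Set (Set (Q × A × Q)) :=
  ⋃ a, BoxesAt δ a

/-- A sequence of boxes is universally accepting if every path through it is accepting. -/
def UnivAcc {A Q : Type} (M : AltAut A Q) (β : ℕ → Set (Q × A × Q)) : Prop :=
  ∀ (ρ : ℕ → Q) (wa : ℕ → A), ρ 0 = M.init →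
    (∀ n, (ρ n, wa n, ρ (n + 1)) ∈ β n) →
    M.acc (fun n => (ρ n, wa n, ρ (n + 1)))

/-- Deterministic parity automaton (priorities on transitions). -/
structure DPA (A P : Type) where
  init : P
  step : P → A → P
  prio : P → A → ℕ

def DPA.run {A P : Type} (D : DPA A P) (w : ℕ → A) : ℕ → P
  | 0 => D.init
  | n + 1 => D.step (DPA.run D w n) (w n)

def DPA.Accepts {A P : Type} (D : DPA A P) (w : ℕ → A) : Prop :=
  ParityAcc fun n => D.prio (D.run w n) (w n)

def pref {A : Type} (w : ℕ → A) (n : ℕ) : List A := List.ofFn fun i : Fin n => w i.val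

/-- Nondeterministic parity automaton. -/
structure NPA (A P : Type) where
  init : P
  Δ : P → A → Set P
  prio : P → A → P → ℕ

def NPA.IsRun {A P : Type} (N : NPA A P) (w : ℕ → A) (ρ : ℕ → P) : Prop :=
  ρ 0 = N.init ∧ ∀ n, ρ (n + 1) ∈ N.Δ (ρ n) (w n)

def NPA.Accepts {A P : Type} (N : NPA A P) (w : ℕ → A) : Prop :=
  ∃ ρ, N.IsRun w ρ ∧ ParityAcc fun n => N.prio (ρ n) (w n) (ρ (n + 1))

/-- A nondeterministic automaton is GFG if its nondeterminism can be resolved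
based only on the prefix of the word read so far. -/
def NPA.GFG {A P : Type} (N : NPA A P) : Prop :=
  ∃ f : List A → P, f [] = N.init ∧ (∀ u a, f (u ++ [a]) ∈ N.Δ (f u) a) ∧
    ∀ w : ℕ → A, N.Accepts w →
      ParityAcc fun n => N.prio (f (pref w n)) (w n) (f (pref w (n + 1)))

/-- Universal parity automaton. -/
structure UPA (A P : Type) where
  init : P
  Δ : P → A → Set P
  prio : P → A → P → ℕ

def UPA.IsRun {A P : Type} (N : UPA A P) (w : ℕ → A) (ρ : ℕ → P) : Prop :=
  ρ 0 = N.init ∧ ∀ n, ρ (n + 1) ∈ N.Δ (ρ n) (w n)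

def UPA.Accepts {A P : Type} (N : UPA A P) (w : ℕ → A) : Prop :=
  ∀ ρ, N.IsRun w ρ → ParityAcc fun n => N.prio (ρ n) (w n) (ρ (n + 1))

/-- A universal automaton is GFG if its universality can be resolved online:
on every word outside the language the produced run is rejecting. -/
def UPA.GFG {A P : Type} (N : UPA A P) : Prop :=
  ∃ f : List A → P, f [] = N.init ∧ (∀ u a, f (u ++ [a]) ∈ N.Δ (f u) a) ∧
    ∀ w : ℕ → A, ¬ N.Accepts w →
      ¬ ParityAcc fun n => N.prio (f (pref w n)) (w n) (f (pref w (n + 1)))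

/-- A run of the box automaton `A^□` over `w` is a sequence of boxes. -/
def BoxRun {A Q : Type} (M : APW A Q) (w : ℕ → A) (β : ℕ → Set (Q × A × Q)) : Prop :=
  ∀ n, β n ∈ BoxesAt M.δ (w n)

/-- Acceptance of the box automaton `A^□` built on a deterministic automaton `B`
over boxes: some box run is accepted by `B`. -/
def boxAccepts {A Q P : Type} (M : APW A Q) (B : DPA (Set (Q × A × Q)) P)
    (w : ℕ → A) : Prop :=
  ∃ β, BoxRun M w β ∧ B.Accepts β

/-- GFGness of the box automaton `A^□`: the box (its only nondeterminism) can be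
chosen based only on the prefix of the word read. -/
def boxGFG {A Q P : Type} (M : APW A Q) (B : DPA (Set (Q × A × Q)) P) : Prop :=
  ∃ g : List A → A → Set (Q × A × Q),
    (∀ u a, g u a ∈ BoxesAt M.δ a) ∧
    ∀ w : ℕ → A, boxAccepts M B w → B.Accepts (fun n => g (pref w n) (w n))

/-- A Rabin/Streett pair of sets of transitions. -/
structure RabinPair (T : Type) where
  bad : Set T
  good : Set T

def RabinAcc {T : Type} (pairs : Set (RabinPair T)) (t : ℕ → T) : Prop :=
  ∃ p ∈ pairs, (¬ InfOften fun n => t n ∈ p.bad) ∧ InfOften fun n => t n ∈ p.good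

def StreettAcc {T : Type} (pairs : Set (RabinPair T)) (t : ℕ → T) : Prop :=
  ∀ p ∈ pairs, (¬ InfOften fun n => t n ∈ p.bad) ∨ InfOften fun n => t n ∈ p.good

/-- Alternating Rabin automaton. -/
structure ARW (A Q : Type) where
  init : Q
  δ : Q → A → PosBool Q
  pairs : Set (RabinPair (Q × A × Q))

def ARW.toAlt {A Q : Type} (M : ARW A Q) : AltAut A Q :=
  { init := M.init, δ := M.δ, acc := RabinAcc M.pairs }

/-- Alternating Streett automaton. -/
structure ASW (A Q : Type) where
  init : Q
  δ : Q → A → PosBool Q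
  pairs : Set (RabinPair (Q × A × Q))

def ASW.toAlt {A Q : Type} (M : ASW A Q) : AltAut A Q :=
  { init := M.init, δ := M.δ, acc := StreettAcc M.pairs }

end GFGPaper

namespace GFGPaper

/-- A conjunction of atoms. -/
def PosBool.isConj {Q : Type} : PosBool Q → Prop
  | .atom _ => True
  | .band φ ψ => φ.isConj ∧ ψ.isConj
  | .bor _ _ => False

/-- Disjunctive normal form: a disjunction of conjunctions of atoms. -/
def PosBool.isDNF {Q : Type} : PosBool Q → Prop
  | .bor φ ψ => φ.isDNF ∧ ψ.isDNF
  | φ => φ.isConj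


section Witness

/-- The six states of the witness automaton. -/
inductive St : Type
  | s0 | s1 | s2 | s3 | s4 | s5
  deriving DecidableEq

open St

/-- Transition function: Adam's conjunction at `s0`, Eve's disjunction at `s3`. -/
def del : St → Unit → PosBool St
  | s0, _ => .band (.atom s1) (.atom s2)
  | s1, _ => .atom s3
  | s2, _ => .atom s3
  | s3, _ => .bor (.atom s4) (.atom s5)
  | s4, _ => .atom s0
  | s5, _ => .atom s0

/-- Eve's choice parametrised by a Boolean (her decision at `s3`). -/
def evChoice : (q : St) → Bool → (a : Unit) → EveChoice (del q a)
  | s0, _, _ => .band (.atom s1) (.atom s2)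
  | s1, _, _ => .atom s3
  | s2, _, _ => .atom s3
  | s3, true, _ => .borl (.atom s4)
  | s3, false, _ => .borr (.atom s5)
  | s4, _, _ => .atom s0
  | s5, _, _ => .atom s0

def pA : RabinPair (St × Unit × St) :=
  { bad := {t | t.1 = s0 ∧ t.2.2 = s1}, good := {t | t.1 = s3 ∧ t.2.2 = s4} }

def pB : RabinPair (St × Unit × St) := { bad := pA.good, good := pA.bad }

def Mw : ASW Unit St := { init := s0, δ := del, pairs := {pA, pB} }

def allowed : St → Set St
  | s0 => {s1, s2}
  | s1 => {s3}
  | s2 => {s3}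
  | s3 => {s4, s5}
  | s4 => {s0}
  | s5 => {s0}

lemma step_K1 (c : ℕ → Bool) (ρ : ℕ → St) (a : ℕ → Unit)
    (h : ∀ n, ρ (n+1) ∈ (evChoice (ρ n) (c n) (a n)).outcome) (n : ℕ) :
    ρ (n+1) ∈ allowed (ρ n) := by
  have H := h n
  revert H
  cases hq : ρ n <;> cases hc : c n <;>
    simp [evChoice, EveChoice.outcome, allowed] <;> tauto

lemma step_K2 (c : ℕ → Bool) (ρ : ℕ → St) (a : ℕ → Unit)
    (h : ∀ n, ρ (n+1) ∈ (evChoice (ρ n) (c n) (a n)).outcome) (n : ℕ)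
    (h3 : ρ (n+2) = s3) : (ρ (n+3) = s4 ↔ c (n+2) = true) := by
  have H := h (n+2)
  rw [h3] at H
  cases hc : c (n+2) <;> rw [hc] at H <;>
    simp [evChoice, EveChoice.outcome] at H <;> simp [H]

/-- The key acceptance lemma: any run in which Eve copies Adam with delay two
satisfies the Streett condition. -/
lemma key_acc (w : ℕ → Unit) (ρ : ℕ → St)
    (K1 : ∀ n, ρ (n+1) ∈ allowed (ρ n))
    (K2 : ∀ n, ρ (n+2) = s3 → (ρ (n+3) = s4 ↔ ρ (n+1) = s1)) :
    StreettAcc Mw.pairs (trace w ρ) := by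
  intro p hp
  have hps : p = pA ∨ p = pB := hp
  rcases hps with rfl | rfl
  · by_cases hB : InfOften fun n => trace w ρ n ∈ pA.bad
    · right
      intro N
      obtain ⟨n, hn, hbad⟩ := hB N
      have h2 : ρ (n+1) = s1 := hbad.2
      have h3 : ρ (n+2) = s3 := by
        have := K1 (n+1); rw [h2] at this; simpa [allowed] using this
      have h4 : ρ (n+3) = s4 := (K2 n h3).2 h2
      exact ⟨n+2, by omega, h3, h4⟩
    · exact Or.inl hB
  · by_cases hB : InfOften fun n => trace w ρ n ∈ pB.bad
    · right
      intro N
      obtain ⟨n, hn, hbad⟩ := hB (N+2)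
      obtain ⟨m, rfl⟩ : ∃ m, n = m + 2 := ⟨n - 2, by omega⟩
      have h1 : ρ (m+1) = s1 := (K2 m hbad.1).1 hbad.2
      have h0 : ρ m = s0 := by
        have h := K1 m
        rw [h1] at h
        cases hq : ρ m <;> rw [hq] at h <;>
          first
          | rfl
          | (exfalso; simp [allowed] at h)
      exact ⟨m, by omega, h0, h1⟩
    · exact Or.inl hB

/-- Eve's decision from the letter-game history: was the state two steps ago `s1`? -/
def condE (h : List (Unit × St)) : Bool := ((h[h.length - 2]?).map Prod.snd) == some s1

lemma condE_spec (w : ℕ → Unit) (ρ : ℕ → St) (n : ℕ) :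
    condE (List.ofFn fun i : Fin (n+2) => (w i.1, ρ (i.1+1))) = true ↔ ρ (n+1) = s1 := by
  have hl : (List.ofFn fun i : Fin (n+2) => (w i.1, ρ (i.1+1))).length = n+2 :=
    List.length_ofFn
  have hn : n < n + 2 := by omega
  have hget : (List.ofFn fun i : Fin (n+2) => (w i.1, ρ (i.1+1)))[n]? =
      some (w n, ρ (n+1)) := by
    rw [List.getElem?_ofFn, dif_pos hn]
  rw [condE, hl]
  have : n + 2 - 2 = n := by omega
  rw [this, hget]
  simp

/-- Eve's decision from the model-checking-game history. -/
def condA (h : List St) : Bool := (h[h.length - 1]?) == some s1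

lemma condA_spec (ρ : ℕ → St) (n : ℕ) :
    condA (List.ofFn fun i : Fin (n+2) => ρ i.1) = true ↔ ρ (n+1) = s1 := by
  have hl : (List.ofFn fun i : Fin (n+2) => ρ i.1).length = n+2 := List.length_ofFn
  have hn : n + 1 < n + 2 := by omega
  have hget : (List.ofFn fun i : Fin (n+2) => ρ i.1)[n+1]? = some (ρ (n+1)) := by
    rw [List.getElem?_ofFn, dif_pos hn]
  rw [condA, hl]
  have : n + 2 - 1 = n + 1 := by omega
  rw [this, hget]
  simp

lemma accepts_all (w : ℕ → Unit) : Mw.toAlt.Accepts w := by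
  refine ⟨fun h n q => evChoice q (condA h) (w n), ?_⟩
  intro ρ h0 hstep
  have hstep' : ∀ n, ρ (n+1) ∈
      (evChoice (ρ n) (condA (List.ofFn fun i : Fin n => ρ i.1)) (w n)).outcome := hstep
  refine key_acc w ρ (fun n => step_K1 _ ρ w hstep' n) ?_
  intro n h3
  rw [step_K2 _ ρ w hstep' n h3]
  exact condA_spec ρ n

lemma exGFG : ExistsGFG Mw.toAlt := by
  refine ⟨fun h a q => evChoice q (condE h) a, ?_⟩
  intro w ρ h0 hstep _
  have hstep' : ∀ n, ρ (n+1) ∈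
      (evChoice (ρ n)
        (condE (List.ofFn fun i : Fin n => (w i.1, ρ (i.1+1)))) (w n)).outcome := hstep
  refine key_acc w ρ (fun n => step_K1 _ ρ w hstep' n) ?_
  intro n h3
  rw [step_K2 _ ρ w hstep' n h3]
  exact condE_spec w ρ n

lemma ev0_mem (a : Unit) (e : EveChoice (del s0 a)) : s1 ∈ e.outcome ∧ s2 ∈ e.outcome := by
  rcases e with _ | ⟨c, d⟩ | _ | _
  rcases c with ⟨_⟩
  rcases d with ⟨_⟩
  simp [EveChoice.outcome]

lemma ev1_mem (a : Unit) (e : EveChoice (del s1 a)) : s3 ∈ e.outcome := by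
  rcases e with ⟨_⟩ ; simp [EveChoice.outcome]

lemma ev2_mem (a : Unit) (e : EveChoice (del s2 a)) : s3 ∈ e.outcome := by
  rcases e with ⟨_⟩ ; simp [EveChoice.outcome]

lemma ev4_mem (a : Unit) (e : EveChoice (del s4 a)) : s0 ∈ e.outcome := by
  rcases e with ⟨_⟩ ; simp [EveChoice.outcome]

lemma ev5_mem (a : Unit) (e : EveChoice (del s5 a)) : s0 ∈ e.outcome := by
  rcases e with ⟨_⟩ ; simp [EveChoice.outcome]

lemma ev3_mem (a : Unit) (e : EveChoice (del s3 a)) : s4 ∈ e.outcome ∨ s5 ∈ e.outcome := by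
  rcases e with _ | _ | c | c <;> rcases c with ⟨_⟩ <;> simp [EveChoice.outcome]

lemma box_mem {a : Unit} {b : Set (St × Unit × St)} (hb : b ∈ BoxesAt del a) :
    (s0, a, s1) ∈ b ∧ (s0, a, s2) ∈ b ∧ (s1, a, s3) ∈ b ∧ (s2, a, s3) ∈ b ∧
    (s4, a, s0) ∈ b ∧ (s5, a, s0) ∈ b ∧ ((s3, a, s4) ∈ b ∨ (s3, a, s5) ∈ b) := by
  obtain ⟨σ, rfl⟩ := hb
  refine ⟨⟨rfl, (ev0_mem a (σ s0)).1⟩, ⟨rfl, (ev0_mem a (σ s0)).2⟩,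
    ⟨rfl, ev1_mem a (σ s1)⟩, ⟨rfl, ev2_mem a (σ s2)⟩,
    ⟨rfl, ev4_mem a (σ s4)⟩, ⟨rfl, ev5_mem a (σ s5)⟩, ?_⟩
  rcases ev3_mem a (σ s3) with h | h
  · exact Or.inl ⟨rfl, h⟩
  · exact Or.inr ⟨rfl, h⟩

open Classical in
/-- Adam's counter-run against a fixed box sequence `β`: he always plays `b` at `s0`. -/
noncomputable def rho (β : ℕ → Set (St × Unit × St)) (b : St) : ℕ → St := fun n =>
  if n % 4 = 0 then s0
  else if n % 4 = 1 then b
  else if n % 4 = 2 then s3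
  else if (s3, (), s4) ∈ β (n - 1) then s4 else s5

lemma rho_eq0 (β : ℕ → Set (St × Unit × St)) (b : St) (n : ℕ) (h : n % 4 = 0) :
    rho β b n = s0 := by simp [rho, h]

lemma rho_eq1 (β : ℕ → Set (St × Unit × St)) (b : St) (n : ℕ) (h : n % 4 = 1) :
    rho β b n = b := by simp [rho, h]

lemma rho_eq2 (β : ℕ → Set (St × Unit × St)) (b : St) (n : ℕ) (h : n % 4 = 2) :
    rho β b n = s3 := by simp [rho, h]

open Classical in
lemma rho_eq3 (β : ℕ → Set (St × Unit × St)) (b : St) (n : ℕ) (h : n % 4 = 3) :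
    rho β b n = if (s3, (), s4) ∈ β (n - 1) then s4 else s5 := by
  simp only [rho, h]
  norm_num

lemma rho_steps (β : ℕ → Set (St × Unit × St)) (hβ : ∀ n, β n ∈ BoxesAt del ()) (b : St)
    (hb : b = s1 ∨ b = s2) (n : ℕ) : (rho β b n, (), rho β b (n+1)) ∈ β n := by
  obtain ⟨m01, m02, m13, m23, m40, m50, m3⟩ := box_mem (hβ n)
  have h4 : n % 4 = 0 ∨ n % 4 = 1 ∨ n % 4 = 2 ∨ n % 4 = 3 := by omega
  rcases h4 with h | h | h | h
  · rw [rho_eq0 β b n h, rho_eq1 β b (n+1) (by omega)]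
    rcases hb with rfl | rfl
    · exact m01
    · exact m02
  · rw [rho_eq1 β b n h, rho_eq2 β b (n+1) (by omega)]
    rcases hb with rfl | rfl
    · exact m13
    · exact m23
  · rw [rho_eq2 β b n h, rho_eq3 β b (n+1) (by omega)]
    have hm : n + 1 - 1 = n := by omega
    rw [hm]
    split
    · assumption
    · rcases m3 with h' | h'
      · exact absurd h' (by assumption)
      · exact h'
  · rw [rho_eq3 β b n h, rho_eq0 β b (n+1) (by omega)]
    split
    · exact m40
    · exact m50

lemma rho_ne_s1 (β : ℕ → Set (St × Unit × St)) (n : ℕ) : rho β s2 n ≠ s1 := by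
  have h4 : n % 4 = 0 ∨ n % 4 = 1 ∨ n % 4 = 2 ∨ n % 4 = 3 := by omega
  rcases h4 with h | h | h | h
  · rw [rho_eq0 β s2 n h]; simp
  · rw [rho_eq1 β s2 n h]; simp
  · rw [rho_eq2 β s2 n h]; simp
  · rw [rho_eq3 β s2 n h]; split <;> simp

lemma rho_s3_mod (β : ℕ → Set (St × Unit × St)) (b : St) (hb : b = s1 ∨ b = s2) (n : ℕ)
    (h3 : rho β b n = s3) : n % 4 = 2 := by
  by_contra hc
  have h4 : n % 4 = 0 ∨ n % 4 = 1 ∨ n % 4 = 3 := by omega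
  rcases h4 with h | h | h
  · rw [rho_eq0 β b n h] at h3; simp at h3
  · rw [rho_eq1 β b n h] at h3
    rcases hb with rfl | rfl <;> simp at h3
  · rw [rho_eq3 β b n h] at h3
    revert h3; split <;> simp

lemma no_word_based :
    ¬ ∃ g : List Unit → Unit → Set (St × Unit × St),
        (∀ u a, g u a ∈ BoxesAt Mw.δ a) ∧
        ∀ w : ℕ → Unit, Mw.toAlt.Accepts w →
          UnivAcc Mw.toAlt (fun n => g (pref w n) (w n)) := by
  rintro ⟨g, hg1, hg2⟩
  set w : ℕ → Unit := fun _ => () with hw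
  set β : ℕ → Set (St × Unit × St) := fun n => g (pref w n) (w n) with hβdef
  have hβ : ∀ n, β n ∈ BoxesAt del () := fun n => hg1 _ _
  by_cases H : ∀ N, ∃ k, N ≤ k ∧ (s3, (), s4) ∈ β (4*k+2)
  · -- Eve's box chooses `t4` infinitely often: Adam always plays `s2`.
    have hsteps := rho_steps β hβ s2 (Or.inr rfl)
    have hρ0 : rho β s2 0 = s0 := rho_eq0 β s2 0 (by omega)
    have hacc := hg2 w (accepts_all w) (rho β s2) w hρ0 hsteps
    have h := hacc pB (Or.inr rfl)
    rcases h with h | h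
    · apply h
      intro N
      obtain ⟨k, hk, hmem⟩ := H N
      refine ⟨4*k+2, by omega, ?_, ?_⟩
      · exact rho_eq2 β s2 (4*k+2) (by omega)
      · have := rho_eq3 β s2 (4*k+3) (by omega)
        have hm : 4*k+3-1 = 4*k+2 := by omega
        rw [hm] at this
        show rho β s2 (4*k+2+1) = s4
        have h43 : 4*k+2+1 = 4*k+3 := by omega
        rw [h43, this, if_pos hmem]
    · obtain ⟨n, hn, hG⟩ := h 0
      exact rho_ne_s1 β (n+1) hG.2
  · -- Eve's box eventually always chooses `t5`: Adam always plays `s1`.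
    push_neg at H
    obtain ⟨N, hN⟩ := H
    have hsteps := rho_steps β hβ s1 (Or.inl rfl)
    have hρ0 : rho β s1 0 = s0 := rho_eq0 β s1 0 (by omega)
    have hacc := hg2 w (accepts_all w) (rho β s1) w hρ0 hsteps
    have h := hacc pA (Or.inl rfl)
    rcases h with h | h
    · apply h
      intro N'
      refine ⟨4*N', by omega, ?_, ?_⟩
      · exact rho_eq0 β s1 (4*N') (by omega)
      · show rho β s1 (4*N'+1) = s1
        exact rho_eq1 β s1 (4*N'+1) (by omega)
    · obtain ⟨n, hn, hG⟩ := h (4*N+3)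
      have h2 : n % 4 = 2 := rho_s3_mod β s1 (Or.inl rfl) n hG.1
      have hk : n = 4*(n/4)+2 := by omega
      have hkN : N ≤ n / 4 := by omega
      have hval := rho_eq3 β s1 (n+1) (by omega)
      have hm : n + 1 - 1 = n := by omega
      rw [hm] at hval
      have hG2 : rho β s1 (n+1) = s4 := hG.2
      rw [hval] at hG2
      by_cases hmem : (s3, (), s4) ∈ β n
      · exact hN (n/4) hkN (hk ▸ hmem)
      · rw [if_neg hmem] at hG2
        simp at hG2

end Witness

/-- there is an alternating Streett automaton with transition
conditions in DNF that is ∃-GFG, but for which Eve has no strategy resolving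
her nondeterminism that depends only on the word read so far, i.e. no function
from finite words to boxes whose induced box sequence is universally accepting
on every word of the language. -/
theorem exists_streett_existsGFG_without_word_based_strategy :
    ∃ (A Q : Type) (M : ASW A Q),
      (∀ q a, (M.δ q a).isDNF) ∧
      ExistsGFG M.toAlt ∧
      ¬ ∃ g : List A → A → Set (Q × A × Q),
          (∀ u a, g u a ∈ BoxesAt M.δ a) ∧
          ∀ w : ℕ → A, M.toAlt.Accepts w →
            UnivAcc M.toAlt (fun n => g (pref w n) (w n)) := by
  refine ⟨Unit, St, Mw, ?_, exGFG, no_word_based⟩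
  intro q a
  cases q <;>
    first
    | exact ⟨trivial, trivial⟩
    | trivial

end GFGPaper
end

section
/- Let A be a GFG alternating parity automaton and D the deterministic product automaton built from positional winning strategies σ of Eve in G(A) and τ of Adam in G'(A). Then L(D) = L(A). -/
namespace GFGPaper

theorem resolve_mem_eve {Q : Type} : {φ : PosBool Q} → (e : EveChoice φ) →
    (a : AdamChoice φ) → resolve e a ∈ e.outcome
  | _, .atom _, _ => rfl
  | _, .band c _, .bandl a => Or.inl (resolve_mem_eve c a)
  | _, .band _ d, .bandr a => Or.inr (resolve_mem_eve d a)
  | _, .borl c, .bor a _ => resolve_mem_eve c a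
  | _, .borr c, .bor _ b => resolve_mem_eve c b

theorem resolve_mem_adam {Q : Type} : {φ : PosBool Q} → (e : EveChoice φ) →
    (a : AdamChoice φ) → resolve e a ∈ a.outcome
  | _, .atom _, .atom _ => rfl
  | _, .band c _, .bandl a => resolve_mem_adam c a
  | _, .band _ d, .bandr a => resolve_mem_adam d a
  | _, .borl c, .bor a _ => Or.inl (resolve_mem_adam c a)
  | _, .borr c, .bor _ b => Or.inr (resolve_mem_adam c b)

/-- let `A` be a GFG alternating parity automaton, `N = A^□` a GFG
nondeterministic parity automaton for `L(A)` and `N' = A̅^□` one for the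
complement. Given a positional winning strategy `(σ1, σ2)` for Eve in `G(A)`
(Adam plays letters, Eve resolves `N'`'s nondeterminism and `A`'s disjunctions;
Eve wins iff the `N'`-run or the `A`-path is accepting) and a positional winning
strategy `(τ1, τ2)` for Adam in `G'(A)` (Eve plays letters, Adam resolves `N`'s
nondeterminism and `A`'s conjunctions; Adam wins iff the `A`-path is rejecting
or the `N`-run is accepting), the deterministic product automaton `D` with
states `(q, p₁, p₂)`, transitions following `τ` and `σ`, and acceptance
inherited from `A`, satisfies `L(D) = L(A)`. -/
theorem product_determinisation_correct
    {A Q P₁ P₂ : Type} (M : APW A Q) (N : NPA A P₁) (N' : NPA A P₂)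
    (hGFG : ExistsGFG M.toAlt ∧ ForallGFG M.toAlt)
    (hN : ∀ w, N.Accepts w ↔ M.Accepts w)
    (hN' : ∀ w, N'.Accepts w ↔ ¬ M.Accepts w)
    (σ1 : P₂ × Q → A → P₂)
    (σ2 : (s : P₂ × Q) → (a : A) → EveChoice (M.δ s.2 a))
    (hσ1 : ∀ s a, σ1 s a ∈ N'.Δ s.1 a)
    (hσwin : ∀ (w : ℕ → A) (ρ : ℕ → P₂ × Q), ρ 0 = (N'.init, M.init) →
      (∀ n, (ρ (n + 1)).1 = σ1 (ρ n) (w n) ∧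
            (ρ (n + 1)).2 ∈ (σ2 (ρ n) (w n)).outcome) →
      (ParityAcc fun n => N'.prio (ρ n).1 (w n) (ρ (n + 1)).1) ∨
      (ParityAcc fun n => M.prio (ρ n).2 (w n) (ρ (n + 1)).2))
    (τ1 : P₁ × Q → A → P₁)
    (τ2 : (s : P₁ × Q) → (a : A) → AdamChoice (M.δ s.2 a))
    (hτ1 : ∀ s a, τ1 s a ∈ N.Δ s.1 a)
    (hτwin : ∀ (w : ℕ → A) (ρ : ℕ → P₁ × Q), ρ 0 = (N.init, M.init) →
      (∀ n, (ρ (n + 1)).1 = τ1 (ρ n) (w n) ∧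
            (ρ (n + 1)).2 ∈ (τ2 (ρ n) (w n)).outcome) →
      (ParityAcc fun n => N.prio (ρ n).1 (w n) (ρ (n + 1)).1) ∨
      ¬ (ParityAcc fun n => M.prio (ρ n).2 (w n) (ρ (n + 1)).2)) :
    ∀ w : ℕ → A,
      DPA.Accepts
        { init := (M.init, N.init, N'.init),
          step := fun s a =>
            (resolve (σ2 (s.2.2, s.1) a) (τ2 (s.2.1, s.1) a),
             τ1 (s.2.1, s.1) a, σ1 (s.2.2, s.1) a),
          prio := fun s a =>
            M.prio s.1 a (resolve (σ2 (s.2.2, s.1) a) (τ2 (s.2.1, s.1) a))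
          : DPA A (Q × P₁ × P₂) } w
      ↔ M.Accepts w := by
  intro w
  let D : DPA A (Q × P₁ × P₂) :=
    { init := (M.init, N.init, N'.init),
      step := fun s a =>
        (resolve (σ2 (s.2.2, s.1) a) (τ2 (s.2.1, s.1) a),
         τ1 (s.2.1, s.1) a, σ1 (s.2.2, s.1) a),
      prio := fun s a =>
        M.prio s.1 a (resolve (σ2 (s.2.2, s.1) a) (τ2 (s.2.1, s.1) a)) }
  show D.Accepts w ↔ M.Accepts w
  let r : ℕ → Q × P₁ × P₂ := D.run w
  have hacc_eq : (fun n => D.prio (r n) (w n))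
      = fun n => M.prio (r n).1 (w n) (r (n + 1)).1 := rfl
  constructor
  · intro hD
    rcases hτwin w (fun n => ((r n).2.1, (r n).1)) rfl
        (fun n => ⟨rfl, resolve_mem_adam _ _⟩) with h | h
    · exact (hN w).mp ⟨fun n => (r n).2.1, ⟨rfl, fun n => hτ1 ((r n).2.1, (r n).1) (w n)⟩, h⟩
    · exact absurd hD h
  · intro hM
    rcases hσwin w (fun n => ((r n).2.2, (r n).1)) rfl
        (fun n => ⟨rfl, resolve_mem_eve _ _⟩) with h | h
    · exact absurd hM ((hN' w).mp ⟨fun n => (r n).2.2, ⟨rfl, fun n => hσ1 ((r n).2.2, (r n).1) (w n)⟩, h⟩)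
    · exact h

end GFGPaper
end

section
/- An alternating parity automaton A is GFG if and only if Eve wins the game G'' in which Adam plays letters of an infinite word and Eve simultaneously builds runs of the nondeterministic automata A^□ (for L(A)) and A̅^□ (for the complement of L(A)), Eve winning iff at least one of the two constructed runs is accepting. -/
namespace GFGPaper

lemma pref_succ {A : Type} (w : ℕ → A) (n : ℕ) : pref w (n+1) = pref w n ++ [w n] := by
  rw [pref, pref, List.ofFn_succ', List.concat_eq_append]
  rfl

/-- an alternating parity automaton `A` is GFG if and only if Eve
wins the game `G''` in which Adam plays the letters of an infinite word and Eve
simultaneously builds runs of `A^□` (for `L(A)`) and `A̅^□` (for the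
complement), winning iff at least one of the two runs is accepting. -/
theorem gfg_iff_eve_wins_Gpp
    {A Q P₁ P₂ : Type} (M : APW A Q) (N : NPA A P₁) (N' : NPA A P₂)
    (hN : ∀ w, N.Accepts w ↔ M.Accepts w)
    (hN' : ∀ w, N'.Accepts w ↔ ¬ M.Accepts w)
    (hNgfg : N.GFG ↔ ExistsGFG M.toAlt)
    (hN'gfg : N'.GFG ↔ ForallGFG M.toAlt) :
    (ExistsGFG M.toAlt ∧ ForallGFG M.toAlt) ↔
    (∃ f : List A → P₁ × P₂, f [] = (N.init, N'.init) ∧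
      (∀ u a, (f (u ++ [a])).1 ∈ N.Δ (f u).1 a ∧
              (f (u ++ [a])).2 ∈ N'.Δ (f u).2 a) ∧
      ∀ w : ℕ → A,
        (ParityAcc fun n => N.prio (f (pref w n)).1 (w n) (f (pref w (n + 1))).1) ∨
        (ParityAcc fun n => N'.prio (f (pref w n)).2 (w n) (f (pref w (n + 1))).2)) := by
  constructor
  · rintro ⟨hE, hF⟩
    obtain ⟨f₁, h1i, h1s, h1a⟩ := hNgfg.mpr hE
    obtain ⟨f₂, h2i, h2s, h2a⟩ := hN'gfg.mpr hF
    refine ⟨fun u => (f₁ u, f₂ u), by simp [h1i, h2i], fun u a => ⟨h1s u a, h2s u a⟩, ?_⟩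
    intro w
    by_cases h : M.Accepts w
    · exact Or.inl (h1a w ((hN w).mpr h))
    · exact Or.inr (h2a w ((hN' w).mpr h))
  · rintro ⟨f, hi, hs, ha⟩
    constructor
    · apply hNgfg.mp
      refine ⟨fun u => (f u).1, by simp [hi], fun u a => (hs u a).1, ?_⟩
      intro w hw
      rcases ha w with h | h
      · exact h
      · exfalso
        have hM : M.Accepts w := (hN w).mp hw
        have : N'.Accepts w := ⟨fun n => (f (pref w n)).2,
          ⟨by simp [pref, hi], fun n => by have := (hs (pref w n) (w n)).2; rwa [← pref_succ] at this⟩, h⟩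
        exact (hN' w).mp this hM
    · apply hN'gfg.mp
      refine ⟨fun u => (f u).2, by simp [hi], fun u a => (hs u a).2, ?_⟩
      intro w hw
      rcases ha w with h | h
      · exfalso
        have hM : ¬ M.Accepts w := (hN' w).mp hw
        have : N.Accepts w := ⟨fun n => (f (pref w n)).1,
          ⟨by simp [pref, hi], fun n => by have := (hs (pref w n) (w n)).1; rwa [← pref_succ] at this⟩, h⟩
        exact hM ((hN w).mp this)
      · exact h


end GFGPaper
end
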